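/- arXiv:2407.07084 — 2 statements merged into one kernel-verified Lean document; each statement's English description precedes it below -/
import Mathlib

section
/- If each f_i : E → ℝ is differentiable, convex, and L-smooth, then for every s ∈ {1,…,n}, every subset S ⊆ {1,…,n} with |S| = s, and all x, y ∈ E: ‖∇m_S(x) − ∇m_S(y)‖ ≤ L‖x − y‖, where m_S := f − f_S; that is, {f_i} have Δ_s-ED of size s with Δ_s = L. -/
/-!
Write `u i = ∇f_i x - ∇f_i y` and `d = x - y`. For a convex `L`-smooth function the
cocoercivity inequality `‖u i‖² ≤ L ⟪u i, d⟫` says exactly that `u i` lies in the closed ball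
of radius `L ‖d‖ / 2` about `(L / 2) • d`. The gradient difference of `m_S` is the average of the
`u i` over all indices minus their average over `S`; both averages lie in that convex ball, so
their distance is at most its diameter `L ‖d‖`.
-/

open Finset RealInnerProductSpace

namespace HasGradientAt

variable {E : Type*} [NormedAddCommGroup E] [InnerProductSpace ℝ E] [CompleteSpace E]
  {f g : E → ℝ} {f' g' x : E}

theorem sub (hf : HasGradientAt f f' x) (hg : HasGradientAt g g' x) :
    HasGradientAt (fun z => f z - g z) (f' - g') x := by
  rw [hasGradientAt_iff_hasFDerivAt, map_sub]
  exact hf.hasFDerivAt.sub hg.hasFDerivAt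

theorem const_mul (c : ℝ) (hf : HasGradientAt f f' x) :
    HasGradientAt (fun z => c * f z) (c • f') x := by
  rw [hasGradientAt_iff_hasFDerivAt, map_smul]
  exact hf.hasFDerivAt.const_mul c

theorem sum {ι : Type*} {T : Finset ι} {A : ι → E → ℝ} {A' : ι → E}
    (h : ∀ i ∈ T, HasGradientAt (A i) (A' i) x) :
    HasGradientAt (fun z => ∑ i ∈ T, A i z) (∑ i ∈ T, A' i) x := by
  rw [hasGradientAt_iff_hasFDerivAt, map_sum]
  exact HasFDerivAt.fun_sum fun i hi => (h i hi).hasFDerivAt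

end HasGradientAt

theorem Convex.inv_card_smul_sum_mem {E ι : Type*} [AddCommGroup E] [Module ℝ E] {s : Set E}
    (hs : Convex ℝ s) {T : Finset ι} (hT : T.Nonempty) {z : ι → E} (hz : ∀ i ∈ T, z i ∈ s) :
    (#T : ℝ)⁻¹ • ∑ i ∈ T, z i ∈ s := by
  rw [smul_sum]
  refine hs.sum_mem (fun _ _ => by positivity) ?_ hz
  rw [sum_const, nsmul_eq_mul, mul_inv_cancel₀]
  exact_mod_cast hT.card_ne_zero

section

variable {E : Type*} [NormedAddCommGroup E] [InnerProductSpace ℝ E]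

theorem mem_closedBall_iff_norm_sq_le_inner {L : ℝ} (hL : 0 ≤ L) (u d : E) :
    u ∈ Metric.closedBall ((L / 2) • d) (L / 2 * ‖d‖) ↔ ‖u‖ ^ 2 ≤ L * ⟪u, d⟫ := by
  rw [mem_closedBall_iff_norm, ← sq_le_sq₀ (norm_nonneg _) (by positivity), norm_sub_sq_real,
    real_inner_smul_right, norm_smul, Real.norm_of_nonneg (by positivity)]
  constructor <;> intro h <;> nlinarith

variable [CompleteSpace E] {g : E → ℝ} {L : ℝ}

theorem le_add_inner_gradient_add_sq (hg : Differentiable ℝ g)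
    (hsmooth : ∀ x y, ‖gradient g x - gradient g y‖ ≤ L * ‖x - y‖) (y z : E) :
    g z ≤ g y + ⟪gradient g y, z - y⟫ + L / 2 * ‖z - y‖ ^ 2 := by
  set d := z - y with hd
  let φ : ℝ → ℝ := fun t => g (y + t • d) - t * ⟪gradient g y, d⟫ - L / 2 * t ^ 2 * ‖d‖ ^ 2
  have hφ : ∀ t, HasDerivAt φ (⟪gradient g (y + t • d) - gradient g y, d⟫ - L * t * ‖d‖ ^ 2) t := by
    intro t
    have hline : HasDerivAt (fun t : ℝ => y + t • d) d t := by
      simpa using ((hasDerivAt_id t).smul_const d).const_add y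
    have hcomp := (hg (y + t • d)).hasGradientAt.hasFDerivAt.comp_hasDerivAt t hline
    rw [InnerProductSpace.toDual_apply_apply] at hcomp
    refine ((hcomp.sub ((hasDerivAt_id t).mul_const ⟪gradient g y, d⟫)).sub
      (((hasDerivAt_pow 2 t).const_mul (L / 2)).mul_const (‖d‖ ^ 2))).congr_deriv ?_
    rw [inner_sub_left]
    ring
  have hanti : AntitoneOn φ (Set.Icc 0 1) := by
    refine antitoneOn_of_deriv_nonpos (convex_Icc 0 1)
      (fun t _ => (hφ t).continuousAt.continuousWithinAt)
      (fun t _ => (hφ t).differentiableAt.differentiableWithinAt) fun t ht => ?_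
    rw [interior_Icc] at ht
    rw [(hφ t).deriv, sub_nonpos]
    calc ⟪gradient g (y + t • d) - gradient g y, d⟫
        ≤ ‖gradient g (y + t • d) - gradient g y‖ * ‖d‖ := real_inner_le_norm _ _
      _ ≤ L * ‖(y + t • d) - y‖ * ‖d‖ := by gcongr; exact hsmooth _ _
      _ = L * t * ‖d‖ ^ 2 := by
        rw [add_sub_cancel_left, norm_smul, Real.norm_of_nonneg ht.1.le]; ring
  have := hanti (Set.left_mem_Icc.2 zero_le_one) (Set.right_mem_Icc.2 zero_le_one) zero_le_one
  simp only [φ, hd, zero_smul, one_smul, add_zero, add_sub_cancel, zero_mul, sub_zero, one_mul,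
    one_pow, zero_pow two_ne_zero, mul_zero] at this
  linarith

theorem norm_gradient_sub_sq_div_le (hg : Differentiable ℝ g)
    (hconv : ∀ x y, g x + ⟪gradient g x, y - x⟫ ≤ g y) (hL : 0 < L)
    (hsmooth : ∀ x y, ‖gradient g x - gradient g y‖ ≤ L * ‖x - y‖) (a b : E) :
    ‖gradient g b - gradient g a‖ ^ 2 / (2 * L) ≤ g b - g a - ⟪gradient g a, b - a⟫ := by
  set w := gradient g b - gradient g a
  -- Compare the tangent plane at `a` with the quadratic upper bound at `b`, at the point `b - w / L`.
  have hlower := hconv a (b - L⁻¹ • w)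
  have hupper := le_add_inner_gradient_add_sq hg hsmooth b (b - L⁻¹ • w)
  rw [sub_right_comm, inner_sub_right, real_inner_smul_right] at hlower
  rw [sub_sub_cancel_left, inner_neg_right, real_inner_smul_right, norm_neg, norm_smul,
    Real.norm_of_nonneg (inv_nonneg.2 hL.le)] at hupper
  have hw : ⟪gradient g b, w⟫ - ⟪gradient g a, w⟫ = ‖w‖ ^ 2 := by
    rw [← inner_sub_left, real_inner_self_eq_norm_sq]
  have h1 : L⁻¹ * ⟪gradient g b, w⟫ - L⁻¹ * ⟪gradient g a, w⟫ = L⁻¹ * ‖w‖ ^ 2 := by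
    rw [← mul_sub, hw]
  have h2 : L / 2 * (L⁻¹ * ‖w‖) ^ 2 = L⁻¹ * ‖w‖ ^ 2 / 2 := by
    field_simp
  have h3 : ‖w‖ ^ 2 / (2 * L) = L⁻¹ * ‖w‖ ^ 2 / 2 := by
    field_simp
  linarith

theorem norm_gradient_sub_sq_le_inner (hg : Differentiable ℝ g)
    (hconv : ∀ x y, g x + ⟪gradient g x, y - x⟫ ≤ g y) (hL : 0 < L)
    (hsmooth : ∀ x y, ‖gradient g x - gradient g y‖ ≤ L * ‖x - y‖) (x y : E) :
    ‖gradient g x - gradient g y‖ ^ 2 ≤ L * ⟪gradient g x - gradient g y, x - y⟫ := by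
  have hxy := norm_gradient_sub_sq_div_le hg hconv hL hsmooth y x
  have hyx := norm_gradient_sub_sq_div_le hg hconv hL hsmooth x y
  rw [norm_sub_rev, ← neg_sub x y, inner_neg_right] at hyx
  rw [div_le_iff₀ (by positivity)] at hxy hyx
  rw [inner_sub_left]
  linarith

end

theorem convex_smooth_implies_ED_L_general
    {E : Type*} [NormedAddCommGroup E] [InnerProductSpace ℝ E] [CompleteSpace E]
    (n : ℕ)
    (f' : Fin n → E → ℝ) (hdiff : ∀ i, Differentiable ℝ (f' i))
    (f : E → ℝ) (hfdef : f = fun x => (1 / (n : ℝ)) * ∑ i, f' i x)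
    (hconv : ∀ i, ∀ x y : E, f' i y ≥ f' i x + ⟪gradient (f' i) x, y - x⟫)
    (L : ℝ) (hL : 0 < L)
    (hsmooth : ∀ i, ∀ x y : E,
      ‖gradient (f' i) x - gradient (f' i) y‖ ≤ L * ‖x - y‖) :
    ∀ s : ℕ, 1 ≤ s → s ≤ n → ∀ S : Finset (Fin n), S.card = s → ∀ x y : E,
      ‖gradient (fun z => f z - (1 / (s : ℝ)) * ∑ j ∈ S, f' j z) x
          - gradient (fun z => f z - (1 / (s : ℝ)) * ∑ j ∈ S, f' j z) y‖
        ≤ L * ‖x - y‖ := by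
  intro s hs _ S hS x y
  subst hfdef
  have hgrad : ∀ z, HasGradientAt
      (fun z => (1 / (n : ℝ)) * ∑ i, f' i z - (1 / (s : ℝ)) * ∑ j ∈ S, f' j z)
      ((1 / (n : ℝ)) • ∑ i, gradient (f' i) z - (1 / (s : ℝ)) • ∑ j ∈ S, gradient (f' j) z) z :=
    fun z => ((HasGradientAt.sum fun i _ => (hdiff i z).hasGradientAt).const_mul _).sub
      ((HasGradientAt.sum fun i _ => (hdiff i z).hasGradientAt).const_mul _)
  set u : Fin n → E := fun i => gradient (f' i) x - gradient (f' i) y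
  set B := Metric.closedBall ((L / 2) • (x - y)) (L / 2 * ‖x - y‖)
  have hu : ∀ i ∈ univ, u i ∈ B := fun i _ => (mem_closedBall_iff_norm_sq_le_inner hL.le _ _).2
    (norm_gradient_sub_sq_le_inner (hdiff i) (hconv i) hL (hsmooth i) x y)
  have hS_ne : S.Nonempty := card_pos.1 (hS ▸ hs)
  have hfull := (convex_closedBall _ _).inv_card_smul_sum_mem (hS_ne.mono (subset_univ S)) hu
  have hsub := (convex_closedBall _ _).inv_card_smul_sum_mem hS_ne fun i _ => hu i (mem_univ i)
  calc _ = dist ((#univ : ℝ)⁻¹ • ∑ i, u i) ((#S : ℝ)⁻¹ • ∑ i ∈ S, u i) := by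
        rw [(hgrad x).gradient, (hgrad y).gradient, dist_eq_norm, card_univ, Fintype.card_fin, hS]
        simp only [u, sum_sub_distrib, smul_sub, one_div]
        abel_nf
    _ ≤ L / 2 * ‖x - y‖ + L / 2 * ‖x - y‖ :=
        (dist_triangle_right _ _ _).trans (add_le_add hfull hsub)
    _ = L * ‖x - y‖ := by ring

/-- Convex `L`-smooth individual functions have `Δ_s`-ED of size `s` with `Δ_s = L`. -/
theorem convex_smooth_implies_ED_L
    {E : Type*} [NormedAddCommGroup E] [InnerProductSpace ℝ E] [CompleteSpace E]
    (n : ℕ) (hn : 0 < n)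
    (f' : Fin n → E → ℝ) (hdiff : ∀ i, Differentiable ℝ (f' i))
    (f : E → ℝ) (hfdef : f = fun x => (1 / (n : ℝ)) * ∑ i, f' i x)
    (hconv : ∀ i, ∀ x y : E, f' i y ≥ f' i x + ⟪gradient (f' i) x, y - x⟫)
    (L : ℝ) (hL : 0 < L)
    (hsmooth : ∀ i, ∀ x y : E,
      ‖gradient (f' i) x - gradient (f' i) y‖ ≤ L * ‖x - y‖) :
    ∀ s : ℕ, 1 ≤ s → s ≤ n → ∀ S : Finset (Fin n), S.card = s → ∀ x y : E,
      ‖gradient (fun z => f z - (1 / (s : ℝ)) * ∑ j ∈ S, f' j z) x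
          - gradient (fun z => f z - (1 / (s : ℝ)) * ∑ j ∈ S, f' j z) y‖
        ≤ L * ‖x - y‖ :=
  convex_smooth_implies_ED_L_general n f' hdiff f hfdef hconv L hL hsmooth
end

section
/- One step of SGD on a strongly convex smooth function: let f : E → ℝ be μ-convex (μ ≥ 0), differentiable, and L-smooth with L > 0, and let x* be a minimizer of f. Let (Ω, P) be a probability space, x ∈ E a fixed point, and g : Ω → E a square-integrable random vector with ∫ g dP = ∇f(x) and ∫ ‖g(ξ) − ∇f(x)‖² dP(ξ) ≤ σ². Let H > L and define x⁺(ξ) := x − (1/H) g(ξ). Then ∫ [f(x⁺(ξ)) − f(x*)] dP(ξ) + (H/2) ∫ ‖x⁺(ξ) − x*‖² dP(ξ) ≤ ((H − μ)/2) ‖x − x*‖² + σ²/(2(H − L)). -/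
open MeasureTheory RealInnerProductSpace

/-!
Write `d = -(1/H) • g` for the step and `e = g - ∇f x` for the gradient noise. The descent lemma
bounds `f (x + d)` above, `μ`-convexity bounds `f x⋆` below, and since `H • d = -(∇f x + e)` the
expansion of `(H/2) ‖x + d - x⋆‖²` cancels every gradient term, leaving
`((H - μ)/2) ‖x - x⋆‖² - ⟪e, x - x⋆⟫ - ⟪e, d⟫ - ((H - L)/2) ‖d‖²`. Young's inequality absorbs
`-⟪e, d⟫` into `‖e‖² / (2 (H - L))`, and on taking expectations `⟪e, x - x⋆⟫` has mean zero.
-/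

open Set in
theorem le_add_inner_gradient_add_sq_of_lipschitz_gradient
    {E : Type*} [NormedAddCommGroup E] [InnerProductSpace ℝ E] [CompleteSpace E]
    {f : E → ℝ} (hf : Differentiable ℝ f) {L : ℝ}
    (hL : ∀ x y : E, ‖gradient f x - gradient f y‖ ≤ L * ‖x - y‖) (x y : E) :
    f y ≤ f x + ⟪gradient f x, y - x⟫ + L / 2 * ‖y - x‖ ^ 2 := by
  set v := y - x
  set G := gradient f x
  let φ : ℝ → ℝ := fun t => f (x + t • v) - t * ⟪G, v⟫ - L / 2 * t ^ 2 * ‖v‖ ^ 2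
  have hφ : ∀ t, HasDerivAt φ (⟪gradient f (x + t • v) - G, v⟫ - L * t * ‖v‖ ^ 2) t := by
    intro t
    have hline : HasDerivAt (fun t : ℝ => x + t • v) v t := by
      simpa using ((hasDerivAt_id t).smul_const v).const_add x
    have hcomp : HasDerivAt (fun t : ℝ => f (x + t • v)) ⟪gradient f (x + t • v), v⟫ t :=
      (hf _).hasGradientAt.hasFDerivAt.comp_hasDerivAt t hline
    refine ((hcomp.sub ((hasDerivAt_id t).mul_const ⟪G, v⟫)).sub
      (((hasDerivAt_pow 2 t).const_mul (L / 2)).mul_const (‖v‖ ^ 2))).congr_deriv ?_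
    simp only [inner_sub_left, one_mul]
    ring
  have hφ_nonpos : ∀ t ∈ Ioi (0 : ℝ), ⟪gradient f (x + t • v) - G, v⟫ - L * t * ‖v‖ ^ 2 ≤ 0 := by
    intro t ht
    refine sub_nonpos.2 ?_
    calc ⟪gradient f (x + t • v) - G, v⟫ ≤ ‖gradient f (x + t • v) - G‖ * ‖v‖ :=
          real_inner_le_norm _ _
      _ ≤ L * ‖x + t • v - x‖ * ‖v‖ := by gcongr; exact hL _ _
      _ = L * t * ‖v‖ ^ 2 := by
          rw [add_sub_cancel_left, norm_smul, Real.norm_of_nonneg ht.le]; ring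
  have hanti : AntitoneOn φ (Ici 0) :=
    antitoneOn_of_hasDerivWithinAt_nonpos (convex_Ici 0)
      (fun t _ => (hφ t).continuousAt.continuousWithinAt)
      (fun t _ => (hφ t).hasDerivWithinAt) (by rwa [interior_Ici])
  have h10 : φ 1 ≤ φ 0 := hanti self_mem_Ici (mem_Ici.2 zero_le_one) zero_le_one
  simp only [φ, v, one_smul, add_sub_cancel, zero_smul, add_zero] at h10
  linarith

theorem real_inner_le_norm_sq_div_add {F : Type*} [NormedAddCommGroup F] [InnerProductSpace ℝ F]
    {a : ℝ} (ha : 0 < a) (u v : F) :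
    ⟪u, v⟫ ≤ ‖u‖ ^ 2 / (2 * a) + a / 2 * ‖v‖ ^ 2 := by
  have h : 0 ≤ ‖u - a • v‖ ^ 2 := sq_nonneg _
  rw [norm_sub_sq_real, norm_smul, real_inner_smul_right, Real.norm_of_nonneg ha.le] at h
  rw [div_add' _ _ _ (by positivity), le_div_iff₀ (by positivity)]
  nlinarith

theorem sgd_step_pointwise_le
    {E : Type*} [NormedAddCommGroup E] [InnerProductSpace ℝ E] [CompleteSpace E]
    {f : E → ℝ} (hf : Differentiable ℝ f) {μ L H : ℝ}
    (hconv : ∀ x y : E, f y ≥ f x + ⟪gradient f x, y - x⟫ + (μ / 2) * ‖x - y‖ ^ 2)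
    (hsmooth : ∀ x y : E, ‖gradient f x - gradient f y‖ ≤ L * ‖x - y‖) (hL : 0 ≤ L)
    (hH : L < H) (x xstar g : E) :
    f (x - (1 / H) • g) - f xstar + H / 2 * ‖x - (1 / H) • g - xstar‖ ^ 2
      ≤ (H - μ) / 2 * ‖x - xstar‖ ^ 2 + ‖g - gradient f x‖ ^ 2 / (2 * (H - L))
        - ⟪g - gradient f x, x - xstar⟫ := by
  set G := gradient f x
  set e := g - G
  set w := x - xstar
  set d := -((1 / H) • g) with hd
  have hg : g = -(H • d) := by
    rw [hd, smul_neg, neg_neg, smul_smul, mul_one_div_cancel (by linarith), one_smul]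
  have he : e = -(H • d) - G := by rw [← hg]
  have hdesc := le_add_inner_gradient_add_sq_of_lipschitz_gradient hf hsmooth x (x + d)
  have hconvx := hconv x xstar
  have hyoung := real_inner_le_norm_sq_div_add (sub_pos.2 hH) e (-d)
  have hnorm : ‖w + d‖ ^ 2 = ‖w‖ ^ 2 + 2 * ⟪w, d⟫ + ‖d‖ ^ 2 := norm_add_sq_real w d
  have hew : ⟪e, w⟫ = -(H * ⟪w, d⟫) - ⟪G, w⟫ := by
    rw [he, inner_sub_left, inner_neg_left, real_inner_smul_left,
      real_inner_comm]
  have hed : ⟪e, d⟫ = -(H * ‖d‖ ^ 2) - ⟪G, d⟫ := by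
    rw [he, inner_sub_left, inner_neg_left, real_inner_smul_left,
      real_inner_self_eq_norm_sq]
  rw [add_sub_cancel_left] at hdesc
  rw [← neg_sub x xstar, inner_neg_right] at hconvx
  rw [inner_neg_right, norm_neg] at hyoung
  rw [sub_eq_add_neg x, ← hd, add_sub_right_comm]
  linear_combination hdesc + hconvx + hyoung + (H / 2) * hnorm + hew + hed

theorem integral_inner_sub_eq_zero {Ω E : Type*} [MeasurableSpace Ω] {P : Measure Ω}
    [IsProbabilityMeasure P] [NormedAddCommGroup E] [InnerProductSpace ℝ E] [CompleteSpace E]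
    {g : Ω → E} (hg : Integrable g P) {m : E} (hmean : ∫ ω, g ω ∂P = m) (v : E) :
    ∫ ω, ⟪g ω - m, v⟫ ∂P = 0 := by
  have hcentered : Integrable (fun ω => g ω - m) P := hg.sub (integrable_const m)
  simp_rw [real_inner_comm v]
  rw [integral_inner hcentered, integral_sub hg (integrable_const m),
    integral_const, probReal_univ, one_smul, hmean, sub_self, inner_zero_right]

theorem integral_add_norm_sub_sq_div_sub_inner {Ω E : Type*} [MeasurableSpace Ω] {P : Measure Ω}
    [IsProbabilityMeasure P] [NormedAddCommGroup E] [InnerProductSpace ℝ E] [CompleteSpace E]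
    {g : Ω → E} (hg : MemLp g 2 P) {m : E} (hmean : ∫ ω, g ω ∂P = m) (a c : ℝ) (v : E) :
    ∫ ω, (a + ‖g ω - m‖ ^ 2 / c - ⟪g ω - m, v⟫) ∂P = a + (∫ ω, ‖g ω - m‖ ^ 2 ∂P) / c := by
  have he : MemLp (fun ω => g ω - m) 2 P := hg.sub (memLp_const m)
  have hsq : Integrable (fun ω => ‖g ω - m‖ ^ 2) P := he.norm.integrable_sq
  have hcross : Integrable (fun ω => ⟪g ω - m, v⟫) P := (he.integrable one_le_two).inner_const v
  have hbound : Integrable (fun ω => a + ‖g ω - m‖ ^ 2 / c) P :=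
    (integrable_const a).add (hsq.div_const c)
  rw [integral_sub hbound hcross, integral_inner_sub_eq_zero (hg.integrable one_le_two) hmean,
    integral_add (integrable_const a) (hsq.div_const c), integral_const, integral_div,
    probReal_univ, one_smul, sub_zero]

theorem sgd_one_step_general
    {E : Type*} [NormedAddCommGroup E] [InnerProductSpace ℝ E] [CompleteSpace E]
    (f : E → ℝ) (hdiff : Differentiable ℝ f)
    (μ : ℝ)
    (hconv : ∀ x y : E,
      f y ≥ f x + ⟪gradient f x, y - x⟫ + (μ / 2) * ‖x - y‖ ^ 2)
    (L : ℝ) (hL : 0 < L)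
    (hsmooth : ∀ x y : E, ‖gradient f x - gradient f y‖ ≤ L * ‖x - y‖)
    (xstar : E) (hstar : ∀ y, f xstar ≤ f y)
    {Ω : Type*} [MeasurableSpace Ω] (P : Measure Ω) [IsProbabilityMeasure P]
    (x : E) (g : Ω → E) (hg : MemLp g 2 P)
    (hmean : ∫ ω, g ω ∂P = gradient f x)
    (σ : ℝ) (hvar : ∫ ω, ‖g ω - gradient f x‖ ^ 2 ∂P ≤ σ ^ 2)
    (H : ℝ) (hH : L < H) :
    (∫ ω, (f (x - (1 / H) • g ω) - f xstar) ∂P)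
        + (H / 2) * ∫ ω, ‖x - (1 / H) • g ω - xstar‖ ^ 2 ∂P
      ≤ ((H - μ) / 2) * ‖x - xstar‖ ^ 2 + σ ^ 2 / (2 * (H - L)) := by
  have hstep := fun ω => sgd_step_pointwise_le hdiff hconv hsmooth hL.le hH x xstar (g ω)
  have he : MemLp (fun ω => g ω - gradient f x) 2 P := hg.sub (memLp_const _)
  have hQ : Integrable (fun ω => ‖x - (1 / H) • g ω - xstar‖ ^ 2) P :=
    (((memLp_const x).sub (hg.const_smul _)).sub (memLp_const xstar)).norm.integrable_sq
  have hR : Integrable (fun ω => (H - μ) / 2 * ‖x - xstar‖ ^ 2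
      + ‖g ω - gradient f x‖ ^ 2 / (2 * (H - L)) - ⟪g ω - gradient f x, x - xstar⟫) P :=
    ((integrable_const _).add (he.norm.integrable_sq.div_const _)).sub
      ((he.integrable one_le_two).inner_const _)
  have hF : Integrable (fun ω => f (x - (1 / H) • g ω) - f xstar) P :=
    integrable_of_le_of_le
      ((hdiff.continuous.comp_aestronglyMeasurable
        (aestronglyMeasurable_const.sub (hg.1.const_smul _))).sub aestronglyMeasurable_const)
      (ae_of_all _ fun ω => sub_nonneg.2 (hstar _))
      (ae_of_all _ fun ω => le_sub_iff_add_le.2 (hstep ω)) (integrable_zero _ _ _)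
      (hR.sub (hQ.const_mul _))
  calc _ = ∫ ω, (f (x - (1 / H) • g ω) - f xstar
          + H / 2 * ‖x - (1 / H) • g ω - xstar‖ ^ 2) ∂P := by
        rw [integral_add hF (hQ.const_mul _), integral_const_mul]
    _ ≤ _ := integral_mono (hF.add (hQ.const_mul _)) hR hstep
    _ = (H - μ) / 2 * ‖x - xstar‖ ^ 2 + (∫ ω, ‖g ω - gradient f x‖ ^ 2 ∂P) / (2 * (H - L)) :=
        integral_add_norm_sub_sq_div_sub_inner hg hmean _ _ _
    _ ≤ _ := by gcongr

/-- One step of SGD on a strongly convex smooth function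
(one-step version of Lemma `thm:SGD-ConvexSmooth`). -/
theorem sgd_one_step
    {E : Type*} [NormedAddCommGroup E] [InnerProductSpace ℝ E] [CompleteSpace E]
    (f : E → ℝ) (hdiff : Differentiable ℝ f)
    (μ : ℝ) (hμ : 0 ≤ μ)
    (hconv : ∀ x y : E,
      f y ≥ f x + ⟪gradient f x, y - x⟫ + (μ / 2) * ‖x - y‖ ^ 2)
    (L : ℝ) (hL : 0 < L)
    (hsmooth : ∀ x y : E, ‖gradient f x - gradient f y‖ ≤ L * ‖x - y‖)
    (xstar : E) (hstar : ∀ y, f xstar ≤ f y)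
    {Ω : Type*} [MeasurableSpace Ω] (P : Measure Ω) [IsProbabilityMeasure P]
    (x : E) (g : Ω → E) (hg : MemLp g 2 P)
    (hmean : ∫ ω, g ω ∂P = gradient f x)
    (σ : ℝ) (hvar : ∫ ω, ‖g ω - gradient f x‖ ^ 2 ∂P ≤ σ ^ 2)
    (H : ℝ) (hH : L < H) :
    (∫ ω, (f (x - (1 / H) • g ω) - f xstar) ∂P)
        + (H / 2) * ∫ ω, ‖x - (1 / H) • g ω - xstar‖ ^ 2 ∂P
      ≤ ((H - μ) / 2) * ‖x - xstar‖ ^ 2 + σ ^ 2 / (2 * (H - L)) :=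
  sgd_one_step_general f hdiff μ hconv L hL hsmooth xstar hstar P x g hg hmean σ hvar H hH
end
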